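/- arXiv:2511.08406 — 4 statements merged into one kernel-verified Lean document; each statement's English description precedes it below -/
import Mathlib

section
/- For every integer n ≥ 2 and every real α ≥ n − 2, the entrywise power map x ↦ x^α preserves positive semidefiniteness on n×n positive semidefinite matrices with strictly positive entries (the 'if' direction of the FitzGerald–Horn theorem). -/
open Matrix

private lemma fh_convex_pos {x y t : ℝ} (hx : 0 < x) (hy : 0 < y) (h0 : 0 ≤ t) (h1 : t ≤ 1) :
    0 < y + t * (x - y) := by
  rcases le_total x y with h | h <;> nlinarith

private lemma fh_integral (α : ℝ) {x y : ℝ} (hx : 0 < x) (hy : 0 < y) :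
    x ^ α - y ^ α = ∫ t in (0:ℝ)..1, α * (x - y) * (y + t * (x - y)) ^ (α - 1) := by
  have huIcc : Set.uIcc (0:ℝ) 1 = Set.Icc 0 1 := Set.uIcc_of_le zero_le_one
  have hpos : ∀ t ∈ Set.uIcc (0:ℝ) 1, 0 < y + t * (x - y) := by
    intro t ht
    rw [huIcc] at ht
    exact fh_convex_pos hx hy ht.1 ht.2
  have hderiv : ∀ t ∈ Set.uIcc (0:ℝ) 1,
      HasDerivAt (fun u => (y + u * (x - y)) ^ α)
        (α * (x - y) * (y + t * (x - y)) ^ (α - 1)) t := by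
    intro t ht
    have h1 : HasDerivAt (fun u : ℝ => y + u * (x - y)) (x - y) t := by
      simpa using ((hasDerivAt_id t).mul_const (x - y)).const_add y
    have h2 := (Real.hasDerivAt_rpow_const (x := y + t * (x - y)) (p := α)
      (Or.inl (hpos t ht).ne')).comp t h1
    rw [show α * (x - y) * (y + t * (x - y)) ^ (α - 1)
        = α * (y + t * (x - y)) ^ (α - 1) * (x - y) by ring]
    exact h2
  have hcont : ContinuousOn (fun t => α * (x - y) * (y + t * (x - y)) ^ (α - 1))
      (Set.uIcc (0:ℝ) 1) := by
    apply ContinuousOn.mul continuousOn_const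
    apply ContinuousOn.rpow_const
    · fun_prop
    · intro t ht
      exact Or.inl (hpos t ht).ne'
  have h := intervalIntegral.integral_eq_sub_of_hasDerivAt hderiv hcont.intervalIntegrable
  rw [h]
  norm_num

private lemma fh_quad {m : ℕ} (M : Matrix (Fin m) (Fin m) ℝ) (z : Fin m → ℝ) :
    z ⬝ᵥ M *ᵥ z = ∑ i, ∑ j, z i * (M i j * z j) := by
  simp [dotProduct, Matrix.mulVec, Finset.mul_sum]

private lemma fh_posSemidef_of {m : ℕ} (M : Matrix (Fin m) (Fin m) ℝ)
    (hsym : ∀ i j, M i j = M j i)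
    (h : ∀ z : Fin m → ℝ, 0 ≤ ∑ i, ∑ j, z i * (M i j * z j)) : M.PosSemidef := by
  refine Matrix.PosSemidef.of_dotProduct_mulVec_nonneg ?_ ?_
  · ext i j
    simp [Matrix.conjTranspose_apply, hsym i j]
  · intro x
    simpa [star_trivial, fh_quad] using h x

private lemma fh_quad_nonneg {m : ℕ} {M : Matrix (Fin m) (Fin m) ℝ} (hM : M.PosSemidef)
    (z : Fin m → ℝ) : 0 ≤ ∑ i, ∑ j, z i * (M i j * z j) := by
  have := hM.dotProduct_mulVec_nonneg z
  simpa [star_trivial, fh_quad] using this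

/-- Schur product theorem, quadratic form version. -/
private lemma fh_schur {m : ℕ} {B D : Matrix (Fin m) (Fin m) ℝ}
    (hB : B.PosSemidef) (hD : D.PosSemidef) (z : Fin m → ℝ) :
    0 ≤ ∑ i, ∑ j, z i * (B i j * D i j * z j) := by
  open scoped MatrixOrder in obtain ⟨M, hM⟩ := CStarAlgebra.nonneg_iff_eq_star_mul_self.mp hD.nonneg
  have hDij : ∀ i j, D i j = ∑ k, M k i * M k j := by
    intro i j
    rw [hM]
    simp [Matrix.mul_apply, Matrix.conjTranspose_apply]
  have e1 : ∀ i j, z i * (B i j * D i j * z j)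
      = ∑ k, (z i * M k i) * (B i j * (z j * M k j)) := by
    intro i j
    rw [hDij]
    simp only [Finset.mul_sum, Finset.sum_mul]
    apply Finset.sum_congr rfl
    intro k _
    ring
  have key : (∑ i, ∑ j, z i * (B i j * D i j * z j))
      = ∑ k, ∑ i, ∑ j, (z i * M k i) * (B i j * (z j * M k j)) := by
    simp_rw [e1]
    have e2 : ∀ i : Fin m, (∑ j, ∑ k, (z i * M k i) * (B i j * (z j * M k j)))
        = ∑ k, ∑ j, (z i * M k i) * (B i j * (z j * M k j)) := by
      intro i
      rw [Finset.sum_comm]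
    rw [Finset.sum_congr rfl (fun i _ => e2 i), Finset.sum_comm]
  rw [key]
  apply Finset.sum_nonneg
  intro k _
  exact fh_quad_nonneg hB fun i => z i * M k i

/-- Cauchy–Schwarz for a psd quadratic form. -/
private lemma fh_cs {m : ℕ} {A : Matrix (Fin m) (Fin m) ℝ} (hA : A.PosSemidef)
    (hsym : ∀ i j, A i j = A j i) (e : Fin m) (z : Fin m → ℝ) :
    (∑ i, z i * A i e) ^ 2 ≤ (∑ i, ∑ j, z i * (A i j * z j)) * A e e := by
  have hq : ∀ t : ℝ, 0 ≤ A e e * (t * t) + (2 * ∑ i, z i * A i e) * t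
      + ∑ i, ∑ j, z i * (A i j * z j) := by
    intro t
    have h := fh_quad_nonneg hA (fun i => z i + t * (if i = e then (1:ℝ) else 0))
    have hswap : ∑ j, t * (A e j * z j) = (∑ i, z i * A i e) * t := by
      rw [Finset.sum_mul]
      apply Finset.sum_congr rfl
      intro j _
      rw [hsym e j]; ring
    have hexp : ∑ i, ∑ j, (z i + t * (if i = e then (1:ℝ) else 0)) *
          (A i j * (z j + t * (if j = e then (1:ℝ) else 0)))
        = A e e * (t * t) + (2 * ∑ i, z i * A i e) * t + ∑ i, ∑ j, z i * (A i j * z j) := by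
      simp only [mul_ite, ite_mul, mul_one, mul_zero, zero_mul, add_zero,
        zero_add, mul_add, add_mul, Finset.sum_add_distrib, Finset.sum_ite_eq', Finset.mem_univ,
        if_true]
      have hpull : ∀ x, (∑ j, if x = e then t * (A x j * z j) else 0)
          = if x = e then ∑ j, t * (A x j * z j) else 0 := by
        intro x; split <;> simp
      simp only [hpull, Finset.sum_ite_eq', Finset.mem_univ, if_true]
      rw [hswap]
      have h3 : ∑ x, z x * (A x e * t) = (∑ i, z i * A i e) * t := by
        rw [Finset.sum_mul]
        apply Finset.sum_congr rfl
        intro j _; ring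
      rw [h3]
      ring
    rw [hexp] at h
    exact h
  have hd := discrim_le_zero hq
  rw [discrim] at hd
  nlinarith [hd]

private lemma fh_two {p q r a b : ℝ} (hp : 0 ≤ p) (hr : 0 ≤ r) (hq : q ^ 2 ≤ p * r) :
    0 ≤ a * (p * a) + a * (q * b) + (b * (q * a) + b * (r * b)) := by
  rcases eq_or_lt_of_le hp with h | h
  · have hq0 : q = 0 := by nlinarith
    rw [← h, hq0]
    have := mul_nonneg hr (mul_self_nonneg b)
    nlinarith
  · nlinarith [sq_nonneg (p * a + q * b), mul_nonneg (sub_nonneg.2 hq) (sq_nonneg b)]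

private lemma fh_sq_rpow {x : ℝ} (hx : 0 ≤ x) (α : ℝ) : (x ^ α) ^ 2 = (x ^ 2) ^ α := by
  rw [← Real.rpow_natCast (x ^ α) 2, ← Real.rpow_mul hx, mul_comm,
    Real.rpow_mul hx, Real.rpow_natCast]

private lemma fh_swap {m : ℕ} (f : Fin m → Fin m → ℝ → ℝ)
    (hf : ∀ i j, IntervalIntegrable (f i j) MeasureTheory.volume 0 1) :
    (∑ i, ∑ j, ∫ t in (0:ℝ)..1, f i j t) = ∫ t in (0:ℝ)..1, ∑ i, ∑ j, f i j t := by
  rw [← Finset.sum_product']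
  rw [← intervalIntegral.integral_finset_sum (fun (p : Fin m × Fin m) _ => hf p.1 p.2)]
  congr 1
  funext u
  exact Finset.sum_product' Finset.univ Finset.univ fun a b => f a b u

set_option maxHeartbeats 1600000 in
private lemma fh_main : ∀ n : ℕ, 2 ≤ n → ∀ α : ℝ, (n : ℝ) - 2 ≤ α →
    ∀ A : Matrix (Fin n) (Fin n) ℝ, A.PosSemidef → (∀ i j, 0 < A i j) →
    (Matrix.of fun i j => A i j ^ α).PosSemidef := by
  intro n hn
  induction n, hn using Nat.le_induction with
  | base =>
    intro α hα A hA hpos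
    have hα0 : 0 ≤ α := by norm_num at hα; exact hα
    have hsym : ∀ i j, A i j = A j i := by
      intro i j
      have := hA.1.apply i j
      simpa using this.symm
    apply fh_posSemidef_of
    · intro i j
      simp [hsym i j]
    · intro z
      have hcs := fh_cs hA hsym 1 (fun i => if i = 0 then (1:ℝ) else 0)
      simp only [Fin.sum_univ_two] at hcs
      norm_num at hcs
      -- hcs : (A 0 1) ^ 2 ≤ A 0 0 * A 1 1
      have hq2 : (A 0 1 ^ α) ^ 2 ≤ A 0 0 ^ α * A 1 1 ^ α := by
        rw [fh_sq_rpow (hpos 0 1).le, ← Real.mul_rpow (hpos 0 0).le (hpos 1 1).le]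
        exact Real.rpow_le_rpow (sq_nonneg _) hcs hα0
      simp only [Fin.sum_univ_two, Matrix.of_apply]
      rw [hsym 1 0]
      exact fh_two (Real.rpow_nonneg (hpos 0 0).le α) (Real.rpow_nonneg (hpos 1 1).le α) hq2
  | succ n hn IH =>
    intro α hα A hA hpos
    have hα1 : 1 ≤ α := by
      push_cast at hα
      have : (2:ℝ) ≤ n := by exact_mod_cast hn
      linarith
    have hα0 : 0 ≤ α := by linarith
    have hsym : ∀ i j, A i j = A j i := by
      intro i j
      have := hA.1.apply i j
      simpa using this.symm
    set e : Fin (n+1) := Fin.last n with he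
    have ha : 0 < A e e := hpos e e
    set s : ℝ := Real.sqrt (A e e) with hs_def
    have hs : 0 < s := Real.sqrt_pos.mpr ha
    have hs2 : s * s = A e e := Real.mul_self_sqrt ha.le
    set ξ : Fin (n+1) → ℝ := fun i => A i e / s with hξ_def
    have hξpos : ∀ i, 0 < ξ i := fun i => div_pos (hpos i e) hs
    have hξξpos : ∀ i j, 0 < ξ i * ξ j := fun i j => mul_pos (hξpos i) (hξpos j)
    have hξe : ∀ i, ξ i * ξ e = A i e := by
      intro i
      have : ξ e = s := by
        rw [hξ_def]
        field_simp [← hs2]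
        rw [sq, hs2]
      rw [this, hξ_def]
      field_simp
    have hξe' : ∀ j, ξ e * ξ j = A e j := by
      intro j
      rw [mul_comm, hξe j, hsym]
    -- the matrix B = A - ξξᵀ is psd
    have hBpsd : (Matrix.of fun i j => A i j - ξ i * ξ j).PosSemidef := by
      apply fh_posSemidef_of
      · intro i j
        simp only [Matrix.of_apply]
        rw [hsym i j, mul_comm]
      · intro w
        have h1 := fh_cs hA hsym e w
        have h2 : ∑ i, ∑ j, w i * ((Matrix.of fun i j => A i j - ξ i * ξ j) i j * w j)
            = (∑ i, ∑ j, w i * (A i j * w j)) - (∑ i, w i * ξ i) * (∑ j, w j * ξ j) := by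
          simp only [Matrix.of_apply]
          rw [Finset.sum_mul_sum]
          rw [← Finset.sum_sub_distrib]
          apply Finset.sum_congr rfl
          intro i _
          rw [← Finset.sum_sub_distrib]
          apply Finset.sum_congr rfl
          intro j _
          ring
        have h3 : (∑ i, w i * ξ i) * (∑ j, w j * ξ j)
            = (∑ i, w i * A i e) ^ 2 / A e e := by
          have hws : ∀ i, w i * ξ i = (w i * A i e) / s := by
            intro i; rw [hξ_def]; ring
          simp_rw [hws, ← Finset.sum_div]
          rw [div_mul_div_comm, hs2, sq]
        rw [h2, h3, sub_nonneg, div_le_iff₀ ha]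
        exact h1
    -- the convex combination matrices and their powers
    apply fh_posSemidef_of
    · intro i j
      simp only [Matrix.of_apply]
      rw [hsym i j]
    · intro z
      simp only [Matrix.of_apply]
      -- the integrand
      set g : Fin (n+1) → Fin (n+1) → ℝ → ℝ := fun i j t =>
        z i * z j * (α * (A i j - ξ i * ξ j) * (ξ i * ξ j + t * (A i j - ξ i * ξ j)) ^ (α - 1))
        with hg_def
      have hgcont : ∀ i j, IntervalIntegrable (g i j) MeasureTheory.volume 0 1 := by
        intro i j
        apply ContinuousOn.intervalIntegrable
        apply ContinuousOn.mul continuousOn_const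
        apply ContinuousOn.mul continuousOn_const
        apply ContinuousOn.rpow_const
        · fun_prop
        · intro t ht
          rw [Set.uIcc_of_le zero_le_one] at ht
          exact Or.inl (fh_convex_pos (hpos i j) (hξξpos i j) ht.1 ht.2).ne'
      have hentry : ∀ i j, z i * (A i j ^ α * z j)
          = z i * ((ξ i * ξ j) ^ α * z j) + ∫ t in (0:ℝ)..1, g i j t := by
        intro i j
        have h1 := fh_integral α (hpos i j) (hξξpos i j)
        have h2 : (∫ t in (0:ℝ)..1, g i j t)
            = z i * z j * (A i j ^ α - (ξ i * ξ j) ^ α) := by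
          rw [hg_def]
          simp only
          rw [intervalIntegral.integral_const_mul, ← h1]
        rw [h2]
        ring
      simp_rw [hentry, Finset.sum_add_distrib]
      apply add_nonneg
      · -- rank-one part
        have hr1 : ∀ i j, z i * ((ξ i * ξ j) ^ α * z j)
            = (z i * ξ i ^ α) * (z j * ξ j ^ α) := by
          intro i j
          rw [Real.mul_rpow (hξpos i).le (hξpos j).le]
          ring
        simp_rw [hr1, ← Finset.mul_sum, ← Finset.sum_mul]
        exact mul_self_nonneg _
      · -- integral part
        rw [fh_swap g hgcont]
        apply intervalIntegral.integral_nonneg zero_le_one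
        intro t ht
        -- pointwise positivity for t ∈ [0,1]
        set C : Matrix (Fin (n+1)) (Fin (n+1)) ℝ :=
          Matrix.of fun i j => ξ i * ξ j + t * (A i j - ξ i * ξ j) with hC_def
        have hCpsd : C.PosSemidef := by
          apply fh_posSemidef_of
          · intro i j
            simp only [hC_def, Matrix.of_apply]
            rw [hsym i j, mul_comm (ξ i)]
          · intro w
            have hterm : ∀ i j, w i * (C i j * w j)
                = (1 - t) * ((w i * ξ i) * (w j * ξ j)) + t * (w i * (A i j * w j)) := by
              intro i j
              simp only [hC_def, Matrix.of_apply]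
              ring
            simp_rw [hterm, Finset.sum_add_distrib, ← Finset.mul_sum]
            apply add_nonneg
            · apply mul_nonneg (by linarith [ht.2])
              rw [← Finset.sum_mul]
              exact mul_self_nonneg _
            · exact mul_nonneg ht.1 (by
                simpa [Finset.mul_sum] using fh_quad_nonneg hA w)
        have hCpos : ∀ i j, 0 < C i j := by
          intro i j
          exact fh_convex_pos (hpos i j) (hξξpos i j) ht.1 ht.2
        -- restrict to the leading n×n block
        set cs : Fin n → Fin (n+1) := Fin.castSucc with hcs_def
        have hD : (Matrix.of fun i j : Fin n =>
            (C.submatrix cs cs) i j ^ (α - 1)).PosSemidef := by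
          apply IH (α - 1) (by push_cast at hα ⊢; linarith)
          · exact hCpsd.submatrix cs
          · intro i j
            exact hCpos (cs i) (cs j)
        have hB' : ((Matrix.of fun i j => A i j - ξ i * ξ j).submatrix cs cs).PosSemidef :=
          hBpsd.submatrix cs
        -- terms involving the last index vanish
        have hge : ∀ j, g e j t = 0 := by
          intro j
          rw [hg_def]
          simp only
          rw [show A e j - ξ e * ξ j = 0 from by rw [hξe' j]; ring]
          ring
        have hge' : ∀ i, g i e t = 0 := by
          intro i
          rw [hg_def]
          simp only
          rw [show A i e - ξ i * ξ e = 0 from by rw [hξe i]; ring]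
          ring
        have hsplit : (∑ i, ∑ j, g i j t)
            = ∑ i : Fin n, ∑ j : Fin n, g (cs i) (cs j) t := by
          rw [Fin.sum_univ_castSucc]
          rw [show (∑ j, g (Fin.last n) j t) = 0 from
            Finset.sum_eq_zero fun j _ => hge j]
          rw [add_zero]
          apply Finset.sum_congr rfl
          intro i _
          rw [Fin.sum_univ_castSucc, hge' (cs i), add_zero]
        rw [hsplit]
        have hfinal : ∀ i j : Fin n, g (cs i) (cs j) t
            = α * ((z (cs i)) * (((Matrix.of fun i j => A i j - ξ i * ξ j).submatrix cs cs) i j *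
                (Matrix.of fun i j : Fin n => (C.submatrix cs cs) i j ^ (α - 1)) i j *
                (z (cs j)))) := by
          intro i j
          rw [hg_def, hC_def]
          simp only [Matrix.submatrix_apply, Matrix.of_apply]
          ring
        simp_rw [hfinal, ← Finset.mul_sum]
        exact mul_nonneg hα0
          (by simpa [Finset.mul_sum] using fh_schur hB' hD (fun i => z (cs i)))

/-- **FitzGerald–Horn** (sufficiency): for `n ≥ 2` and real `α ≥ n - 2`, the entrywise
power `x ↦ x^α` preserves positive semidefiniteness on `n × n` psd matrices with
strictly positive entries. -/
theorem entrywise_rpow_preserves_posSemidef {n : ℕ} (hn : 2 ≤ n) (α : ℝ)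
    (hα : (n : ℝ) - 2 ≤ α) (A : Matrix (Fin n) (Fin n) ℝ)
    (hA : A.PosSemidef) (hpos : ∀ i j, 0 < A i j) :
    (Matrix.of fun i j => A i j ^ α).PosSemidef :=
  fh_main n hn α hα A hA hpos
end

section
/- For every integer n ≥ 3 and every real α ∈ (0, n−2) with α not an integer, there exists an n×n positive semidefinite matrix A with strictly positive entries such that the entrywise power A^{∘α} = (a_{ij}^α) is not positive semidefinite. -/
open Matrix

/-- The `k`-th "derivative function" in the FitzGerald–Horn argument. -/
private noncomputable def fhPhi {n : ℕ} (v x : Fin n → ℝ) (α : ℝ) (k : ℕ) (t : ℝ) : ℝ :=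
  (∏ j ∈ Finset.range k, (α - j)) *
    ∑ i, ∑ j, v i * v j * (x i * x j) ^ k * (1 + t * (x i * x j)) ^ (α - k)

private lemma fhPhi_hasDerivAt {n : ℕ} (v x : Fin n → ℝ) (α : ℝ) (hx : ∀ i, 0 < x i)
    {t : ℝ} (ht : 0 ≤ t) (k : ℕ) :
    HasDerivAt (fhPhi v x α k) (fhPhi v x α (k + 1) t) t := by
  have hD : ∀ i j : Fin n,
      HasDerivAt (fun s => v i * v j * (x i * x j) ^ k * (1 + s * (x i * x j)) ^ (α - k))
        (v i * v j * (x i * x j) ^ k *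
          ((x i * x j) * (α - k) * (1 + t * (x i * x j)) ^ (α - k - 1))) t := by
    intro i j
    have hc : (0:ℝ) < x i * x j := mul_pos (hx i) (hx j)
    have hbpos : (0:ℝ) < 1 + t * (x i * x j) := by nlinarith
    have hlin : HasDerivAt (fun s : ℝ => 1 + s * (x i * x j)) (x i * x j) t := by
      simpa using ((hasDerivAt_id t).mul_const (x i * x j)).const_add (1:ℝ)
    exact (hlin.rpow_const (Or.inl hbpos.ne')).const_mul _
  have hsum : HasDerivAt
      (fun s => ∑ i, ∑ j, v i * v j * (x i * x j) ^ k * (1 + s * (x i * x j)) ^ (α - k))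
      (∑ i, ∑ j, v i * v j * (x i * x j) ^ k *
        ((x i * x j) * (α - k) * (1 + t * (x i * x j)) ^ (α - k - 1))) t :=
    HasDerivAt.fun_sum fun i _ => HasDerivAt.fun_sum fun j _ => hD i j
  have h := hsum.const_mul (∏ j ∈ Finset.range k, (α - j))
  have heq : fhPhi v x α (k + 1) t =
      (∏ j ∈ Finset.range k, (α - j)) * ∑ i, ∑ j, v i * v j * (x i * x j) ^ k *
        ((x i * x j) * (α - k) * (1 + t * (x i * x j)) ^ (α - k - 1)) := by
    unfold fhPhi
    rw [Finset.prod_range_succ]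
    simp only [Nat.cast_add, Nat.cast_one, sub_add_eq_sub_sub, Finset.mul_sum]
    refine Finset.sum_congr rfl fun i _ => Finset.sum_congr rfl fun j _ => ?_
    ring
  rw [heq]
  exact h

private lemma fhPhi_zero {n : ℕ} (v x : Fin n → ℝ) (α : ℝ) (k : ℕ) :
    fhPhi v x α k 0 = (∏ j ∈ Finset.range k, (α - j)) * (∑ i, v i * x i ^ k) ^ 2 := by
  unfold fhPhi
  congr 1
  rw [sq, Finset.sum_mul_sum]
  refine Finset.sum_congr rfl fun i _ => Finset.sum_congr rfl fun j _ => ?_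
  rw [zero_mul, add_zero, Real.one_rpow]
  ring

private lemma fh_neg_of_deriv_neg {g g' : ℝ → ℝ} {δ : ℝ} (hδ : 0 < δ)
    (hd : ∀ t ∈ Set.Icc (0:ℝ) δ, HasDerivAt g (g' t) t)
    (h0 : g 0 = 0) (hneg : ∀ t ∈ Set.Ioc (0:ℝ) δ, g' t < 0) :
    ∀ t ∈ Set.Ioc (0:ℝ) δ, g t < 0 := by
  have hanti : StrictAntiOn g (Set.Icc 0 δ) := by
    apply strictAntiOn_of_deriv_neg (convex_Icc 0 δ)
    · exact fun t ht => (hd t ht).continuousAt.continuousWithinAt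
    · intro t ht
      rw [interior_Icc] at ht
      rw [(hd t (Set.Ioo_subset_Icc_self ht)).deriv]
      exact hneg t ⟨ht.1, ht.2.le⟩
  intro t ht
  have h := hanti (Set.left_mem_Icc.2 hδ.le) (Set.Ioc_subset_Icc_self ht) ht.1
  rwa [h0] at h

private lemma fh_exists_good_vector (f n : ℕ) (hfn : f + 3 ≤ n) :
    ∃ v : Fin n → ℝ,
      (∀ k : ℕ, k ≤ f + 1 → ∑ i, v i * (((i : ℕ) : ℝ) + 1) ^ k = 0) ∧
      ∑ i, v i * (((i : ℕ) : ℝ) + 1) ^ (f + 2) = 1 := by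
  classical
  set xv : Fin (f+3) → ℝ := fun i => ((i : ℕ) : ℝ) + 1 with hxv
  have hinj : Function.Injective xv := by
    intro a b h
    simp only [hxv] at h
    have h2 : ((a : ℕ) : ℝ) = ((b : ℕ) : ℝ) := by linarith
    exact Fin.ext (by exact_mod_cast h2)
  set M : Matrix (Fin (f+3)) (Fin (f+3)) ℝ := (Matrix.vandermonde xv)ᵀ with hM
  have hdet : IsUnit M.det := by
    rw [hM, Matrix.det_transpose]
    exact (Matrix.det_vandermonde_ne_zero_iff.mpr hinj).isUnit
  set e : Fin (f+3) := Fin.last (f+2) with he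
  set v' : Fin (f+3) → ℝ := M⁻¹ *ᵥ Pi.single e 1 with hv'
  have hMv' : M *ᵥ v' = Pi.single e 1 := by
    rw [hv', Matrix.mulVec_mulVec, Matrix.mul_nonsing_inv _ hdet, Matrix.one_mulVec]
  have main : ∀ c : Fin (f+3),
      (∑ i : Fin n, (if h : (i : ℕ) < f + 3 then v' ⟨i, h⟩ else 0) *
        (((i : ℕ) : ℝ) + 1) ^ (c : ℕ)) = (Pi.single e 1 : Fin (f+3) → ℝ) c := by
    intro c
    rw [← hMv']
    rw [Fin.sum_univ_eq_sum_range
      (fun j => (if h : j < f + 3 then v' ⟨j, h⟩ else 0) * (((j : ℕ) : ℝ) + 1) ^ (c : ℕ)) n]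
    rw [← Finset.sum_subset (Finset.range_subset_range.mpr hfn)
      (fun j _ hj => by rw [dif_neg (by simpa using hj), zero_mul])]
    rw [← Fin.sum_univ_eq_sum_range
      (fun j => (if h : j < f + 3 then v' ⟨j, h⟩ else 0) * (((j : ℕ) : ℝ) + 1) ^ (c : ℕ)) (f+3)]
    simp only [Matrix.mulVec, dotProduct]
    refine Finset.sum_congr rfl fun i _ => ?_
    rw [dif_pos i.isLt]
    simp only [Fin.eta, hM, Matrix.transpose_apply, Matrix.vandermonde_apply, hxv]
    ring
  refine ⟨fun i => if h : (i : ℕ) < f + 3 then v' ⟨i, h⟩ else 0, ?_, ?_⟩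
  · intro k hk
    have hk3 : k < f + 3 := by omega
    have hne : (⟨k, hk3⟩ : Fin (f+3)) ≠ e := by
      simp only [he]
      intro hcon
      have := congrArg Fin.val hcon
      simp [Fin.last] at this
      omega
    have h := main ⟨k, hk3⟩
    rw [Pi.single_eq_of_ne hne] at h
    exact h
  · have h := main e
    rw [Pi.single_eq_same] at h
    exact h

/-- **FitzGerald–Horn** (necessity): for `n ≥ 3` and non-integer `α ∈ (0, n - 2)`,
there is an `n × n` psd matrix with strictly positive entries whose entrywise `α`-th
power is not positive semidefinite. -/
theorem exists_posSemidef_entrywise_rpow_not_posSemidef {n : ℕ} (hn : 3 ≤ n) (α : ℝ)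
    (hα0 : 0 < α) (hα : α < (n : ℝ) - 2) (hint : ¬∃ m : ℤ, α = m) :
    ∃ A : Matrix (Fin n) (Fin n) ℝ, A.PosSemidef ∧ (∀ i j, 0 < A i j) ∧
      ¬(Matrix.of fun i j => A i j ^ α).PosSemidef := by
  classical
  set f : ℕ := ⌊α⌋₊ with hfdef
  have hfα : (f : ℝ) < α := by
    rcases lt_or_eq_of_le (Nat.floor_le hα0.le) with h | h
    · exact h
    · exact absurd ⟨(f : ℤ), by exact_mod_cast h.symm⟩ hint
  have hαf1 : α < (f : ℝ) + 1 := Nat.lt_floor_add_one α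
  have hf3n : f + 3 ≤ n := by
    have h2 : ((f + 2 : ℕ) : ℝ) < (n : ℝ) := by push_cast; linarith
    have h3 := Nat.cast_lt.mp h2
    omega
  obtain ⟨v, hm0, hm1⟩ := fh_exists_good_vector f n hf3n
  set x : Fin n → ℝ := fun i => ((i : ℕ) : ℝ) + 1 with hxd
  have hx : ∀ i, 0 < x i := fun i => by simp only [hxd]; positivity
  have hm0x : ∀ k : ℕ, k ≤ f + 1 → ∑ i, v i * x i ^ k = 0 := by
    intro k hk; simp only [hxd]; exact hm0 k hk
  have hm1x : ∑ i, v i * x i ^ (f + 2) = 1 := by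
    simp only [hxd]; exact hm1
  have hprodpos : 0 < ∏ j ∈ Finset.range (f + 1), (α - j) := by
    refine Finset.prod_pos fun j hj => ?_
    have hjf : (j : ℝ) ≤ (f : ℝ) := by
      exact_mod_cast Nat.lt_succ_iff.mp (Finset.mem_range.mp hj)
    linarith
  have hprodneg : (∏ j ∈ Finset.range (f + 2), (α - j)) < 0 := by
    rw [Finset.prod_range_succ]
    refine mul_neg_of_pos_of_neg hprodpos ?_
    push_cast
    linarith
  have hPhi0 : ∀ k : ℕ, k ≤ f + 1 → fhPhi v x α k 0 = 0 := by
    intro k hk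
    rw [fhPhi_zero, hm0x k hk]
    simp
  have hPhineg : fhPhi v x α (f + 2) 0 < 0 := by
    rw [fhPhi_zero, hm1x, one_pow, mul_one]
    exact hprodneg
  have hcont : ContinuousAt (fhPhi v x α (f + 2)) 0 :=
    (fhPhi_hasDerivAt v x α hx (le_refl (0:ℝ)) (f + 2)).continuousAt
  have hev : ∀ᶠ t in nhds (0:ℝ), fhPhi v x α (f + 2) t < 0 :=
    Filter.Tendsto.eventually_lt_const hPhineg hcont
  rw [Metric.eventually_nhds_iff] at hev
  obtain ⟨ε, hε, hball⟩ := hev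
  set δ : ℝ := ε / 2 with hδdef
  have hδ : 0 < δ := by positivity
  have hbase : ∀ t ∈ Set.Icc (0:ℝ) δ, fhPhi v x α (f + 2) t < 0 := by
    intro t ht
    apply hball
    rw [Real.dist_eq, sub_zero, abs_of_nonneg ht.1]
    have := ht.2
    rw [hδdef] at this
    linarith
  have main : ∀ j : ℕ, j ≤ f + 2 → ∀ t ∈ Set.Ioc (0:ℝ) δ, fhPhi v x α (f + 2 - j) t < 0 := by
    intro j
    induction j with
    | zero => exact fun _ t ht => hbase t (Set.Ioc_subset_Icc_self ht)
    | succ j ih =>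
      intro hj
      have hk : f + 2 - (j + 1) + 1 = f + 2 - j := by omega
      refine fh_neg_of_deriv_neg (g' := fhPhi v x α (f + 2 - j)) hδ ?_ ?_ ?_
      · intro s hs
        have h := fhPhi_hasDerivAt v x α hx hs.1 (f + 2 - (j + 1))
        rwa [hk] at h
      · exact hPhi0 _ (by omega)
      · exact ih (by omega)
  have final : fhPhi v x α 0 δ < 0 := by
    have h := main (f + 2) le_rfl δ ⟨hδ, le_rfl⟩
    rwa [Nat.sub_self] at h
  refine ⟨Matrix.of fun i j => 1 + δ * (x i * x j), posSemidef_iff_dotProduct_mulVec.mpr ⟨?_, ?_⟩, ?_, ?_⟩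
  · -- Hermitian
    ext i j
    simp only [Matrix.conjTranspose_apply, Matrix.of_apply, star_trivial]
    ring
  · -- psd quadratic form
    intro u
    have expand : dotProduct u ((Matrix.of fun i j => 1 + δ * (x i * x j)) *ᵥ u) =
        (∑ i, u i) ^ 2 + δ * (∑ i, u i * x i) ^ 2 := by
      simp only [dotProduct, Matrix.mulVec, Matrix.of_apply]
      rw [sq, sq, Finset.sum_mul_sum, Finset.sum_mul_sum, Finset.mul_sum,
        ← Finset.sum_add_distrib]
      refine Finset.sum_congr rfl fun i _ => ?_
      simp only [Finset.mul_sum]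
      rw [← Finset.sum_add_distrib]
      refine Finset.sum_congr rfl fun j _ => ?_
      ring
    have hsu : star u = u := star_trivial u
    rw [hsu, expand]
    have h1 : (0:ℝ) ≤ (∑ i, u i) ^ 2 := sq_nonneg _
    have h2 : (0:ℝ) ≤ δ * (∑ i, u i * x i) ^ 2 := mul_nonneg hδ.le (sq_nonneg _)
    linarith
  · -- positive entries
    intro i j
    simp only [Matrix.of_apply]
    have hc := mul_pos (hx i) (hx j)
    have := mul_pos hδ hc
    linarith
  · -- entrywise power not psd
    intro hB
    have h2 := (posSemidef_iff_dotProduct_mulVec.mp hB).2 v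
    rw [star_trivial] at h2
    have hval : dotProduct v ((Matrix.of fun i j =>
        (Matrix.of fun i j => 1 + δ * (x i * x j)) i j ^ α) *ᵥ v) = fhPhi v x α 0 δ := by
      unfold fhPhi
      simp only [dotProduct, Matrix.mulVec, Matrix.of_apply, Finset.prod_range_zero,
        one_mul, pow_zero, Nat.cast_zero, sub_zero, mul_one]
      refine Finset.sum_congr rfl fun i _ => ?_
      rw [Finset.mul_sum]
      refine Finset.sum_congr rfl fun j _ => ?_
      ring
    rw [hval] at h2
    linarith
end

section
/- Let F_q be a finite field with q = p^ℓ, p prime. Call a scalar positive if it is a nonzero square, and call a symmetric n×n matrix over F_q positive definite if all its leading principal minors are nonzero squares. Then for any positive c ∈ F_q and 0 ≤ k ≤ ℓ−1, the entrywise map f(x) = c x^{p^k} sends positive definite matrices over F_q to positive definite matrices over F_q. -/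
open Matrix

/-- A scalar in a finite field is *positive* if it is a nonzero square. -/
def FqPos {F : Type*} [Field F] (a : F) : Prop := a ≠ 0 ∧ IsSquare a

/-- A symmetric matrix over a finite field is *positive definite* if all its leading
principal minors are nonzero squares. -/
def FqPosDef {F : Type*} [Field F] {n : ℕ} (A : Matrix (Fin n) (Fin n) F) : Prop :=
  ∀ (m : ℕ) (h : m ≤ n), 1 ≤ m →
    FqPos ((A.submatrix (Fin.castLE h) (Fin.castLE h)).det)

/-! The map `x ↦ x ^ p ^ k` is a ring endomorphism of `F` (the iterated Frobenius, as `F` has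
characteristic `p`), so entrywise it commutes with determinants, and ring homomorphisms of fields
send nonzero squares to nonzero squares. Scaling by `c` multiplies the `m × m` leading minor by
`c ^ m`, again a nonzero square. -/

theorem FqPos.mul {F : Type*} [Field F] {a b : F} (ha : FqPos a) (hb : FqPos b) :
    FqPos (a * b) :=
  ⟨mul_ne_zero ha.1 hb.1, ha.2.mul hb.2⟩

theorem FqPos.pow {F : Type*} [Field F] {a : F} (ha : FqPos a) (m : ℕ) : FqPos (a ^ m) :=
  ⟨pow_ne_zero m ha.1, ha.2.pow m⟩

theorem FqPos.map {F K : Type*} [Field F] [Field K] {a : F} (ha : FqPos a) (φ : F →+* K) :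
    FqPos (φ a) :=
  ⟨(map_ne_zero φ).2 ha.1, ha.2.map φ⟩

theorem FqPosDef.smul_map {F K : Type*} [Field F] [Field K] {n : ℕ}
    {A : Matrix (Fin n) (Fin n) F} (hA : FqPosDef A) (φ : F →+* K) {c : K} (hc : FqPos c) :
    FqPosDef (c • A.map φ) := by
  intro m h hm
  have hminor : ((c • A.map φ).submatrix (Fin.castLE h) (Fin.castLE h)).det =
      c ^ m * φ (A.submatrix (Fin.castLE h) (Fin.castLE h)).det := by
    change (c • (A.submatrix (Fin.castLE h) (Fin.castLE h)).map φ).det = _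
    rw [det_smul, Fintype.card_fin, RingHom.map_det, RingHom.mapMatrix_apply]
  rw [hminor]
  exact (hc.pow m).mul ((hA m h hm).map φ)

theorem entrywise_frobenius_preserves_posDef_general
    {p ℓ : ℕ} (hp : p.Prime)
    (F : Type*) [Field F] [Fintype F] (hcard : Fintype.card F = p ^ ℓ)
    (c : F) (hc : FqPos c) (k : ℕ)
    {n : ℕ} (A : Matrix (Fin n) (Fin n) F) (hApd : FqPosDef A) :
    FqPosDef (Matrix.of fun i j => c * A i j ^ p ^ k) := by
  have : Fact p.Prime := ⟨hp⟩
  have : CharP F p := charP_of_card_eq_prime_pow hcard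
  have hfrob : (Matrix.of fun i j => c * A i j ^ p ^ k) = c • A.map (iterateFrobenius F p k) := by
    ext i j
    simp [iterateFrobenius_def]
  rw [hfrob]
  exact hApd.smul_map _ hc

/-- Over `F_q` with `q = p^ℓ`, the entrywise map `x ↦ c x^{pᵏ}` (with `c` a nonzero
square and `0 ≤ k ≤ ℓ - 1`) sends positive definite matrices to positive definite
matrices. -/
theorem entrywise_frobenius_preserves_posDef
    {p ℓ : ℕ} (hp : p.Prime) (hℓ : 1 ≤ ℓ)
    (F : Type*) [Field F] [Fintype F] (hcard : Fintype.card F = p ^ ℓ)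
    (c : F) (hc : FqPos c) (k : ℕ) (hk : k ≤ ℓ - 1)
    {n : ℕ} (A : Matrix (Fin n) (Fin n) F) (hA : A.IsSymm) (hApd : FqPosDef A) :
    FqPosDef (Matrix.of fun i j => c * A i j ^ p ^ k) :=
  entrywise_frobenius_preserves_posDef_general hp F hcard c hc k A hApd
end

section
/- Let f(t) = Σ_{k=0}^d c_k G_k^{(n)}(t) be a real polynomial that is a nonnegative linear combination of normalized Gegenbauer polynomials for S^{n−1} (all c_k ≥ 0, c_0 > 0), and suppose f(t) ≤ 0 for all t ∈ [−1, cos ψ]. Then any set of points ξ_1, …, ξ_N on S^{n−1} with pairwise inner products ⟨ξ_i, ξ_j⟩ ≤ cos ψ for i ≠ j satisfies N ≤ f(1)/c_0 (the Delsarte–Goethals–Seidel linear programming bound). -/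
/-!
Homogenising the Gegenbauer recurrence by `|y|²` gives, for a unit vector `x`, a harmonic
homogeneous polynomial `Zₓ` of degree `k` with `Zₓ(y) = G_k(⟨x, y⟩)` on the sphere. For the
Fischer inner product `⟨p, q⟩ = ∑ₘ pₘ qₘ m!`, multiplication by `⟨x, ·⟩` and by `|·|²` is adjoint
to the directional derivative `∂ₓ` and to the Laplacian. Since `∂ₓ` maps harmonic polynomials
to harmonic polynomials and `∂ₓ p (x) = deg p · p(x)`, the recurrence gives `⟨p, Zₓ⟩ = α p(x)`
with `α > 0` for every harmonic `p` of degree `k`. For `p = ∑ᵢ Z_{ξᵢ}` this yields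
`∑ᵢⱼ G_k(⟨ξᵢ, ξⱼ⟩) = α⁻¹ ⟨p, p⟩ ≥ 0`. Keeping only the `k = 0` term, and dropping the
off-diagonal terms (where `f ≤ 0`), gives `c₀ N² ≤ ∑ᵢⱼ f(⟨ξᵢ, ξⱼ⟩) ≤ N f(1)`.
-/

open Matrix Finset

noncomputable section

/-- The normalized Gegenbauer polynomial `G_k^{(n)}` for the sphere `S^{n-1}`,
defined by the standard three-term recurrence, with `G_k^{(n)}(1) = 1`. -/
def gegenbauer (n : ℕ) : ℕ → ℝ → ℝ
  | 0, _ => 1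
  | 1, t => t
  | (k + 2), t =>
      ((2 * ((k : ℝ) + 2) + n - 4) * t * gegenbauer n (k + 1) t
        - ((k : ℝ) + 1) * gegenbauer n k t) / (((k : ℝ) + 2) + n - 3)

lemma natCast_add_sub_one_pos {n : ℕ} (hn : 2 ≤ n) (k : ℕ) : 0 < (k + n - 1 : ℝ) := by
  have : (2 : ℝ) ≤ n := by exact_mod_cast hn
  linarith [(k.cast_nonneg : (0 : ℝ) ≤ k)]

namespace MvPolynomial

open Nat

variable {σ : Type*}

lemma pderiv_pderiv_comm {R : Type*} [CommRing R] (i j : σ) (p : MvPolynomial σ R) :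
    pderiv i (pderiv j p) = pderiv j (pderiv i p) := by
  classical
  have h : ⁅pderiv i, pderiv j⁆ = (0 : Derivation R (MvPolynomial σ R) (MvPolynomial σ R)) :=
    derivation_ext fun k => by
      rw [Derivation.commutator_apply, pderiv_X, pderiv_X, Pi.single_apply, Pi.single_apply]
      split_ifs <;> simp
  have hp := congr($h p)
  rwa [Derivation.commutator_apply, Derivation.zero_apply, sub_eq_zero] at hp

variable [Fintype σ]

def multiFactorial (m : σ →₀ ℕ) : ℝ := ∏ i, ((m i)! : ℝ)

lemma multiFactorial_pos (m : σ →₀ ℕ) : 0 < multiFactorial m :=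
  Finset.prod_pos fun i _ => by positivity

lemma multiFactorial_add_single [DecidableEq σ] (m : σ →₀ ℕ) (i : σ) :
    multiFactorial (m + Finsupp.single i 1) = (m i + 1) * multiFactorial m := by
  have h (j : σ) : (((m + Finsupp.single i 1 : σ →₀ ℕ) j)! : ℝ) =
      (if j = i then (m i + 1 : ℝ) else 1) * (m j)! := by
    rcases eq_or_ne j i with rfl | hj
    · simp [Nat.factorial_succ]
    · simp [hj]
  simp only [multiFactorial, h, Finset.prod_mul_distrib, Finset.prod_ite_eq', Finset.mem_univ,
    if_true]

-- Defined on the coefficient `Finsupp` so that bilinearity is `Finsupp.sum` bookkeeping;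
-- `fischer_apply` is the usual formula.
def fischer : LinearMap.BilinForm ℝ (MvPolynomial σ ℝ) :=
  LinearMap.mk₂ ℝ
    (fun p q => (AddMonoidAlgebra.coeff p).sum fun m a => a * coeff m q * multiFactorial m)
    (fun p p' q => by
      rw [AddMonoidAlgebra.coeff_add]
      exact Finsupp.sum_add_index' (by simp) (by intros; ring))
    (fun c p q => by
      rw [AddMonoidAlgebra.coeff_smul, Finsupp.sum_smul_index' (by simp), smul_eq_mul,
        Finsupp.mul_sum]
      simp only [smul_eq_mul, mul_assoc])
    (fun p q q' => by simp only [coeff_add, mul_add, add_mul, Finsupp.sum_add])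
    (fun c p q => by
      simp only [coeff_smul, smul_eq_mul, Finsupp.mul_sum]
      exact Finsupp.sum_congr fun _ _ => by ring)

lemma fischer_apply (p q : MvPolynomial σ ℝ) :
    fischer p q = ∑ m ∈ p.support, coeff m p * coeff m q * multiFactorial m :=
  sum_def (b := fun m a => a * coeff m q * multiFactorial m)

lemma fischer_monomial_left (u : σ →₀ ℕ) (a : ℝ) (q : MvPolynomial σ ℝ) :
    fischer (monomial u a) q = a * coeff u q * multiFactorial u := by
  classical
  rw [fischer_apply, support_monomial]
  split_ifs with ha <;> simp [ha]

lemma fischer_self_nonneg (p : MvPolynomial σ ℝ) : 0 ≤ fischer p p :=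
  (fischer_apply p p).symm ▸
    Finset.sum_nonneg fun m _ => mul_nonneg (mul_self_nonneg _) (multiFactorial_pos m).le

lemma fischer_X_mul (i : σ) (p q : MvPolynomial σ ℝ) :
    fischer p (X i * q) = fischer (pderiv i p) q := by
  classical
  induction p using MvPolynomial.induction_on' with
  | add p p' hp hp' => simp only [map_add, LinearMap.add_apply, hp, hp']
  | monomial u a =>
    rw [pderiv_monomial, fischer_monomial_left, fischer_monomial_left, coeff_X_mul']
    by_cases hu : u i = 0
    · simp [hu]
    · obtain ⟨v, rfl⟩ : ∃ v, u = v + Finsupp.single i 1 :=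
        ⟨_, (Finsupp.sub_add_single_one_cancel hu).symm⟩
      simp [multiFactorial_add_single]
      ring

lemma fischer_one_of_isHomogeneous_zero {p : MvPolynomial σ ℝ} (hp : p.IsHomogeneous 0)
    (x : σ → ℝ) : fischer p 1 = eval x p := by
  rw [← totalDegree_zero_iff_isHomogeneous, totalDegree_eq_zero_iff_eq_C] at hp
  rw [hp, ← monomial_zero', fischer_monomial_left]
  simp [multiFactorial]

variable (σ) in
def sumSq : MvPolynomial σ ℝ := ∑ i, X i ^ 2

def linearForm (x : σ → ℝ) : MvPolynomial σ ℝ := ∑ i, C (x i) * X i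

def dirDeriv (x : σ → ℝ) : Derivation ℝ (MvPolynomial σ ℝ) (MvPolynomial σ ℝ) :=
  ∑ i, x i • pderiv i

def laplacian : Module.End ℝ (MvPolynomial σ ℝ) :=
  ∑ i, (pderiv i).toLinearMap * (pderiv i).toLinearMap

lemma dirDeriv_apply (x : σ → ℝ) (p : MvPolynomial σ ℝ) :
    dirDeriv x p = ∑ i, x i • pderiv i p := by
  rw [dirDeriv, ← Derivation.coeFnAddMonoidHom_apply, map_sum, Finset.sum_apply]
  rfl

lemma laplacian_apply (p : MvPolynomial σ ℝ) : laplacian p = ∑ i, pderiv i (pderiv i p) := by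
  simp [laplacian]

lemma pderiv_linearForm (x : σ → ℝ) (i : σ) : pderiv i (linearForm x) = C (x i) := by
  classical
  simp [linearForm, Pi.single_apply]

lemma pderiv_sumSq (i : σ) : pderiv i (sumSq σ) = (2 : ℝ) • X i := by
  classical
  simp [sumSq, Pi.single_apply, two_smul]

lemma eval_linearForm (x y : σ → ℝ) : eval y (linearForm x) = x ⬝ᵥ y := by
  simp [linearForm, dotProduct]

lemma eval_sumSq (y : σ → ℝ) : eval y (sumSq σ) = y ⬝ᵥ y := by
  simp [sumSq, dotProduct, sq]

lemma dirDeriv_linearForm (x y : σ → ℝ) : dirDeriv x (linearForm y) = C (x ⬝ᵥ y) := by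
  simp [dirDeriv_apply, pderiv_linearForm, dotProduct, ← C_mul', map_sum]

lemma dirDeriv_sumSq (x : σ → ℝ) : dirDeriv x (sumSq σ) = (2 : ℝ) • linearForm x := by
  simp [dirDeriv_apply, pderiv_sumSq, linearForm, Finset.smul_sum, C_mul', smul_comm (x _)]

lemma eval_dirDeriv_self {k : ℕ} {p : MvPolynomial σ ℝ} (hp : p.IsHomogeneous k) (x : σ → ℝ) :
    eval x (dirDeriv x p) = k * eval x p := by
  have h := congr(eval x $(hp.sum_X_mul_pderiv))
  simp only [map_sum, eval_mul, eval_X, nsmul_eq_mul] at h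
  simp [dirDeriv_apply, map_sum, smul_eval, h]

lemma IsHomogeneous.dirDeriv {k : ℕ} {p : MvPolynomial σ ℝ} (hp : p.IsHomogeneous (k + 1))
    (x : σ → ℝ) : (dirDeriv x p).IsHomogeneous k := by
  rw [dirDeriv_apply]
  exact IsHomogeneous.sum _ _ _ fun i _ => by
    simpa [← C_mul'] using (hp.pderiv (i := i)).C_mul (x i)

lemma fischer_linearForm_mul (x : σ → ℝ) (p q : MvPolynomial σ ℝ) :
    fischer p (linearForm x * q) = fischer (dirDeriv x p) q := by
  simp [linearForm, dirDeriv_apply, Finset.sum_mul, map_sum, C_mul', fischer_X_mul]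

lemma fischer_sumSq_mul (p q : MvPolynomial σ ℝ) :
    fischer p (sumSq σ * q) = fischer (laplacian p) q := by
  simp [sumSq, laplacian_apply, Finset.sum_mul, map_sum, sq, mul_assoc, fischer_X_mul]

lemma laplacian_dirDeriv (x : σ → ℝ) (p : MvPolynomial σ ℝ) :
    laplacian (dirDeriv x p) = dirDeriv x (laplacian p) := by
  simp only [laplacian_apply, dirDeriv_apply, map_sum, map_smul, Finset.smul_sum]
  rw [Finset.sum_comm]
  refine Finset.sum_congr rfl fun j _ => Finset.sum_congr rfl fun i _ => ?_
  rw [pderiv_pderiv_comm j i p, pderiv_pderiv_comm j i (pderiv j p)]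

lemma laplacian_mul (p q : MvPolynomial σ ℝ) :
    laplacian (p * q) = laplacian p * q + (2 : ℝ) • ∑ i, pderiv i p * pderiv i q +
      p * laplacian q := by
  simp only [laplacian_apply, pderiv_mul, map_add, Finset.sum_mul, Finset.mul_sum,
    Finset.smul_sum, ← Finset.sum_add_distrib]
  refine Finset.sum_congr rfl fun i _ => ?_
  rw [two_smul]
  ring

lemma laplacian_linearForm_mul (x : σ → ℝ) (q : MvPolynomial σ ℝ) :
    laplacian (linearForm x * q) = (2 : ℝ) • dirDeriv x q + linearForm x * laplacian q := by
  have hΔ : laplacian (linearForm x) = 0 := by simp [laplacian_apply, pderiv_linearForm]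
  simp [laplacian_mul, hΔ, pderiv_linearForm, dirDeriv_apply, C_mul']

lemma laplacian_sumSq_mul {k : ℕ} {q : MvPolynomial σ ℝ} (hq : q.IsHomogeneous k) :
    laplacian (sumSq σ * q) =
      (2 * Fintype.card σ + 4 * k : ℝ) • q + sumSq σ * laplacian q := by
  have hΔ : laplacian (sumSq σ) = (2 * Fintype.card σ : ℝ) • 1 := by
    simp [laplacian_apply, pderiv_sumSq, mul_smul, Nat.cast_smul_eq_nsmul]
  have hE : ∑ i, pderiv i (sumSq σ) * pderiv i q = (2 * k : ℝ) • q := by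
    simp [pderiv_sumSq, ← Finset.smul_sum, hq.sum_X_mul_pderiv, mul_smul, Nat.cast_smul_eq_nsmul]
  rw [laplacian_mul, hΔ, hE, smul_mul_assoc, one_mul]
  module

/-- The Gegenbauer recurrence with `1` homogenised to `sumSq σ`, so that `zonal x k` is
homogeneous of degree `k`. -/
def zonal (x : σ → ℝ) : ℕ → MvPolynomial σ ℝ
  | 0 => 1
  | 1 => linearForm x
  | k + 2 => (k + Fintype.card σ - 1 : ℝ)⁻¹ •
      ((2 * k + Fintype.card σ : ℝ) • (linearForm x * zonal x (k + 1)) -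
        (k + 1 : ℝ) • (sumSq σ * zonal x k))

lemma zonal_add_two (x : σ → ℝ) (k : ℕ) :
    zonal x (k + 2) = (k + Fintype.card σ - 1 : ℝ)⁻¹ •
      ((2 * k + Fintype.card σ : ℝ) • (linearForm x * zonal x (k + 1)) -
        (k + 1 : ℝ) • (sumSq σ * zonal x k)) :=
  rfl

lemma smul_zonal_add_two (hn : 2 ≤ Fintype.card σ) (x : σ → ℝ) (k : ℕ) :
    (k + Fintype.card σ - 1 : ℝ) • zonal x (k + 2) =
      (2 * k + Fintype.card σ : ℝ) • (linearForm x * zonal x (k + 1)) -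
        (k + 1 : ℝ) • (sumSq σ * zonal x k) := by
  rw [zonal_add_two, smul_inv_smul₀ (natCast_add_sub_one_pos hn k).ne']

lemma isHomogeneous_linearForm (x : σ → ℝ) : (linearForm x).IsHomogeneous 1 :=
  IsHomogeneous.sum _ _ _ fun i _ => (isHomogeneous_X ℝ i).C_mul (x i)

lemma isHomogeneous_sumSq : (sumSq σ).IsHomogeneous 2 :=
  IsHomogeneous.sum _ _ _ fun i _ => (isHomogeneous_X ℝ i).pow 2

lemma isHomogeneous_zonal (x : σ → ℝ) (k : ℕ) : (zonal x k).IsHomogeneous k := by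
  induction k using Nat.twoStepInduction with
  | zero => exact isHomogeneous_one _ _
  | one => exact isHomogeneous_linearForm x
  | more k hk hk1 =>
    have h1 : (linearForm x * zonal x (k + 1)).IsHomogeneous (k + 2) := by
      simpa [add_comm, add_left_comm] using (isHomogeneous_linearForm x).mul hk1
    have h2 : (sumSq σ * zonal x k).IsHomogeneous (k + 2) := by
      simpa [add_comm] using isHomogeneous_sumSq.mul hk
    rw [zonal_add_two]
    simp only [smul_eq_C_mul]
    exact ((h1.C_mul _).sub (h2.C_mul _)).C_mul _

lemma eval_zonal {y : σ → ℝ} (hy : y ⬝ᵥ y = 1) (x : σ → ℝ) (k : ℕ) :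
    eval y (zonal x k) = gegenbauer (Fintype.card σ) k (x ⬝ᵥ y) := by
  induction k using Nat.twoStepInduction with
  | zero => simp [zonal, gegenbauer]
  | one => simp [zonal, gegenbauer, eval_linearForm]
  | more k hk hk1 =>
    simp only [zonal_add_two, smul_eval, map_sub, eval_mul, eval_linearForm, eval_sumSq, hy, hk,
      hk1, gegenbauer]
    ring

lemma dirDeriv_mul (x : σ → ℝ) (p q : MvPolynomial σ ℝ) :
    dirDeriv x (p * q) = dirDeriv x p * q + p * dirDeriv x q := by
  rw [Derivation.leibniz, smul_eq_mul, smul_eq_mul, add_comm, mul_comm q]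

lemma dirDeriv_zonal (hn : 2 ≤ Fintype.card σ) {x : σ → ℝ} (hx : x ⬝ᵥ x = 1) (k : ℕ) :
    dirDeriv x (zonal x (k + 1)) = (k + 1 : ℝ) • zonal x k := by
  have hlin : dirDeriv x (linearForm x) = 1 := by rw [dirDeriv_linearForm, hx, C_1]
  induction k using Nat.twoStepInduction with
  | zero => simpa [zonal] using hlin
  | one =>
    rw [zonal_add_two, Derivation.map_smul, inv_smul_eq_iff₀ (natCast_add_sub_one_pos hn 0).ne']
    simp only [zonal, mul_one, one_mul, map_sub, Derivation.map_smul, dirDeriv_mul, hlin,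
      dirDeriv_sumSq]
    push_cast
    module
  | more k hk hk1 =>
    have hrec := smul_zonal_add_two hn x k
    rw [zonal_add_two, Derivation.map_smul, map_sub, Derivation.map_smul, Derivation.map_smul,
      dirDeriv_mul, dirDeriv_mul, hlin, dirDeriv_sumSq, hk1, hk,
      inv_smul_eq_iff₀ (natCast_add_sub_one_pos hn _).ne']
    simp only [one_mul, mul_smul_comm, smul_mul_assoc]
    push_cast
    linear_combination (norm := module) (-(k + 2 : ℝ)) • hrec

lemma laplacian_zonal (hn : 2 ≤ Fintype.card σ) {x : σ → ℝ} (hx : x ⬝ᵥ x = 1) (k : ℕ) :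
    laplacian (zonal x k) = 0 := by
  induction k using Nat.twoStepInduction with
  | zero => simp [zonal, laplacian_apply]
  | one => simp [zonal, laplacian_apply, pderiv_linearForm]
  | more k hk hk1 =>
    rw [zonal_add_two, map_smul, map_sub, map_smul, map_smul, laplacian_linearForm_mul,
      laplacian_sumSq_mul (isHomogeneous_zonal x k), hk, hk1, dirDeriv_zonal hn hx k]
    simp only [mul_zero, add_zero, smul_smul]
    match_scalars
    ring

lemma fischer_linearForm_mul_zonal {k : ℕ} {α : ℝ}
    (hα : ∀ x (p : MvPolynomial σ ℝ), p.IsHomogeneous k → laplacian p = 0 →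
      fischer p (zonal x k) = α * eval x p)
    (x : σ → ℝ) {p : MvPolynomial σ ℝ} (hp : p.IsHomogeneous (k + 1)) (hΔ : laplacian p = 0) :
    fischer p (linearForm x * zonal x k) = α * (k + 1) * eval x p := by
  rw [fischer_linearForm_mul, hα x _ (hp.dirDeriv x) (by rw [laplacian_dirDeriv, hΔ, map_zero]),
    eval_dirDeriv_self hp]
  push_cast
  ring

lemma exists_fischer_zonal_eq (hn : 2 ≤ Fintype.card σ) (k : ℕ) :
    ∃ α > 0, ∀ x (p : MvPolynomial σ ℝ), p.IsHomogeneous k → laplacian p = 0 →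
      fischer p (zonal x k) = α * eval x p := by
  have h0 : ∀ x (p : MvPolynomial σ ℝ), p.IsHomogeneous 0 → laplacian p = 0 →
      fischer p (zonal x 0) = 1 * eval x p := fun x p hp _ => by
    rw [one_mul]
    exact fischer_one_of_isHomogeneous_zero hp x
  induction k using Nat.twoStepInduction with
  | zero => exact ⟨1, one_pos, h0⟩
  | one =>
    refine ⟨1, one_pos, fun x p hp hΔ => ?_⟩
    simpa [zonal] using fischer_linearForm_mul_zonal h0 x hp hΔ
  | more k _ hk1 =>
    obtain ⟨α, hα, h⟩ := hk1
    refine ⟨(k + Fintype.card σ - 1 : ℝ)⁻¹ * ((2 * k + Fintype.card σ) * (α * (k + 2))), ?_, ?_⟩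
    · have := natCast_add_sub_one_pos hn k
      positivity
    · intro x p hp hΔ
      rw [zonal_add_two, map_smul, map_sub, map_smul, map_smul,
        fischer_linearForm_mul_zonal h x hp hΔ, fischer_sumSq_mul, hΔ, map_zero,
        LinearMap.zero_apply]
      push_cast
      simp only [smul_eq_mul]
      ring

end MvPolynomial

open MvPolynomial

theorem sum_gegenbauer_dotProduct_nonneg {σ ι : Type*} [Fintype σ] [Fintype ι]
    (hn : 2 ≤ Fintype.card σ) (k : ℕ) {ξ : ι → σ → ℝ} (hξ : ∀ i, ξ i ⬝ᵥ ξ i = 1) :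
    0 ≤ ∑ i, ∑ j, gegenbauer (Fintype.card σ) k (ξ i ⬝ᵥ ξ j) := by
  obtain ⟨α, hα, hrepr⟩ := exists_fischer_zonal_eq hn k
  set p := ∑ i, zonal (ξ i) k
  have hp : p.IsHomogeneous k := IsHomogeneous.sum _ _ _ fun i _ => isHomogeneous_zonal _ k
  have hΔ : laplacian p = 0 := by simp [p, map_sum, laplacian_zonal hn (hξ _)]
  calc 0 ≤ α⁻¹ * fischer p p := mul_nonneg (inv_nonneg.2 hα.le) (fischer_self_nonneg p)
    _ = α⁻¹ * fischer p (∑ j, zonal (ξ j) k) := rfl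
    _ = ∑ j, eval (ξ j) p := by
      simp only [map_sum, Finset.mul_sum, hrepr _ _ hp hΔ, inv_mul_cancel_left₀ hα.ne']
    _ = ∑ i, ∑ j, gegenbauer (Fintype.card σ) k (ξ i ⬝ᵥ ξ j) := by
      simp only [p, map_sum, eval_zonal (hξ _)]
      exact Finset.sum_comm

lemma gegenbauer_one {n : ℕ} (hn : 2 ≤ n) (k : ℕ) : gegenbauer n k 1 = 1 := by
  induction k using Nat.twoStepInduction with
  | zero => rfl
  | one => rfl
  | more k hk hk1 =>
    rw [gegenbauer, hk, hk1, div_eq_one_iff_eq (by linarith [natCast_add_sub_one_pos hn k])]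
    ring

lemma sum_sum_le_sum_diag {ι : Type*} [Fintype ι] [DecidableEq ι] (F : ι → ι → ℝ)
    (h : ∀ i j, i ≠ j → F i j ≤ 0) : ∑ i, ∑ j, F i j ≤ ∑ i, F i i :=
  Finset.sum_le_sum fun i _ => by
    rw [← Finset.add_sum_erase _ _ (Finset.mem_univ i), add_le_iff_nonpos_right]
    exact Finset.sum_nonpos fun j hj => h i j (Finset.ne_of_mem_erase hj).symm

theorem sum_gegenbauer_inner_nonneg {n : ℕ} (hn : 2 ≤ n) (k : ℕ) {ι : Type*} [Fintype ι]
    {ξ : ι → EuclideanSpace ℝ (Fin n)} (hξ : ∀ i, ‖ξ i‖ = 1) :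
    0 ≤ ∑ i, ∑ j, gegenbauer n k (inner ℝ (ξ i) (ξ j)) := by
  have hunit (i : ι) : (ξ i).ofLp ⬝ᵥ (ξ i).ofLp = 1 := by
    have h := real_inner_self_eq_norm_sq (ξ i)
    rwa [hξ i, one_pow, EuclideanSpace.inner_eq_star_dotProduct, star_trivial] at h
  have h := sum_gegenbauer_dotProduct_nonneg (by simpa using hn) k hunit
  simpa [EuclideanSpace.inner_eq_star_dotProduct, dotProduct_comm] using h

lemma mul_card_sq_le_sum_sum {n : ℕ} (hn : 2 ≤ n) {ι : Type*} [Fintype ι]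
    {ξ : ι → EuclideanSpace ℝ (Fin n)} (hξ : ∀ i, ‖ξ i‖ = 1) (d : ℕ) {c : ℕ → ℝ}
    (hc : ∀ k ≤ d, 0 ≤ c k) :
    c 0 * Fintype.card ι ^ 2 ≤
      ∑ i, ∑ j, ∑ k ∈ range (d + 1), c k * gegenbauer n k (inner ℝ (ξ i) (ξ j)) :=
  calc c 0 * Fintype.card ι ^ 2 = c 0 * ∑ i, ∑ j, gegenbauer n 0 (inner ℝ (ξ i) (ξ j)) := by
        simp [gegenbauer, sq]
    _ ≤ ∑ k ∈ range (d + 1), c k * ∑ i, ∑ j, gegenbauer n k (inner ℝ (ξ i) (ξ j)) :=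
        Finset.single_le_sum (f := fun k => c k * ∑ i, ∑ j, gegenbauer n k (inner ℝ (ξ i) (ξ j)))
          (fun k hk => mul_nonneg (hc k (Nat.lt_succ_iff.mp (Finset.mem_range.mp hk)))
            (sum_gegenbauer_inner_nonneg hn k hξ)) (by simp)
    _ = _ := by
        simp only [Finset.mul_sum]
        rw [Finset.sum_comm]
        exact Finset.sum_congr rfl fun i _ => Finset.sum_comm

theorem delsarte_goethals_seidel_bound_general
    (n : ℕ) (hn : 2 ≤ n) (ψ : ℝ)
    (d : ℕ) (c : ℕ → ℝ) (hc : ∀ k ≤ d, 0 ≤ c k) (hc0 : 0 < c 0)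
    (f : ℝ → ℝ) (hf : ∀ t, f t = ∑ k ∈ range (d + 1), c k * gegenbauer n k t)
    (hneg : ∀ t ∈ Set.Icc (-1 : ℝ) (Real.cos ψ), f t ≤ 0)
    (N : ℕ) (ξ : Fin N → EuclideanSpace ℝ (Fin n)) (hξ : ∀ i, ‖ξ i‖ = 1)
    (hcode : ∀ i j, i ≠ j → (inner ℝ (ξ i) (ξ j) : ℝ) ≤ Real.cos ψ) :
    (N : ℝ) ≤ f 1 / c 0 := by
  have hlower : c 0 * N ^ 2 ≤ ∑ i, ∑ j, f (inner ℝ (ξ i) (ξ j)) := by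
    simpa [hf] using mul_card_sq_le_sum_sum hn hξ d hc
  have hupper : ∑ i, ∑ j, f (inner ℝ (ξ i) (ξ j)) ≤ N * f 1 := by
    refine (sum_sum_le_sum_diag _ fun i j hij => hneg _ ⟨?_, hcode i j hij⟩).trans ?_
    · have := abs_real_inner_le_norm (ξ i) (ξ j)
      rw [hξ i, hξ j, one_mul] at this
      exact (abs_le.mp this).1
    · simp [hξ]
  have hf1 : 0 ≤ f 1 := by
    rw [hf]
    exact Finset.sum_nonneg fun k hk => by
      rw [gegenbauer_one hn, mul_one]
      exact hc k (Nat.lt_succ_iff.mp (Finset.mem_range.mp hk))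
  rw [le_div_iff₀ hc0]
  rcases N.eq_zero_or_pos with rfl | hN
  · simpa using hf1
  · have hN' : (0 : ℝ) < N := by exact_mod_cast hN
    nlinarith

/-- **Delsarte–Goethals–Seidel linear programming bound**: if
`f = Σ_{k=0}^d c_k G_k^{(n)}` with all `c_k ≥ 0`, `c_0 > 0`, and `f ≤ 0` on
`[-1, cos ψ]`, then any spherical `ψ`-code `ξ₁, …, ξ_N ⊆ S^{n-1}` satisfies
`N ≤ f(1)/c₀`. -/
theorem delsarte_goethals_seidel_bound
    (n : ℕ) (hn : 2 ≤ n) (ψ : ℝ) (hψ : ψ ∈ Set.Icc 0 Real.pi)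
    (d : ℕ) (c : ℕ → ℝ) (hc : ∀ k ≤ d, 0 ≤ c k) (hc0 : 0 < c 0)
    (f : ℝ → ℝ) (hf : ∀ t, f t = ∑ k ∈ range (d + 1), c k * gegenbauer n k t)
    (hneg : ∀ t ∈ Set.Icc (-1 : ℝ) (Real.cos ψ), f t ≤ 0)
    (N : ℕ) (ξ : Fin N → EuclideanSpace ℝ (Fin n)) (hξ : ∀ i, ‖ξ i‖ = 1)
    (hcode : ∀ i j, i ≠ j → (inner ℝ (ξ i) (ξ j) : ℝ) ≤ Real.cos ψ) :
    (N : ℝ) ≤ f 1 / c 0 :=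
  delsarte_goethals_seidel_bound_general n hn ψ d c hc hc0 f hf hneg N ξ hξ hcode
end
end
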